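/- For integers m, p, t ≥ 1 consider the Cameron–Walker graph G^{(1)}_{m,p,t} whose bipartite part is K_{m,p}, with s_1 = ... = s_m = 1, t_1 = ... = t_{p−1} = 1, and t_p = t. Then |V(G)| = 2m + 3p + 2t − 2, the independence number of G equals m + p + t − 1, and i(G) = m + p. -/

import Mathlib

/-- A finite set of vertices is independent in `G` if no two of its members are adjacent. -/
def SimpleGraph.IsIndepFinset {V : Type*} (G : SimpleGraph V) (A : Finset V) : Prop :=
  ∀ u ∈ A, ∀ v ∈ A, ¬ G.Adj u v

/-- `A` is an independent dominating set of `G`: `A` is independent and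
`A ∪ N_G(A) = V(G)`, i.e. every vertex is in `A` or adjacent to a member of `A`. -/
def SimpleGraph.IsIndepDomFinset {V : Type*} (G : SimpleGraph V) (A : Finset V) : Prop :=
  G.IsIndepFinset A ∧ ∀ v : V, v ∈ A ∨ ∃ u ∈ A, G.Adj u v

/-- The vertex set of a Cameron–Walker graph in standard form:
the `vᵢ` (`i : Fin m`), the `w_j` (`j : Fin p`), the `sᵢ` leaves attached to `vᵢ`,
and the two extra vertices of each of the `t_j` pendant triangles attached to `w_j`. -/
abbrev CWVert (m p : ℕ) (s : Fin m → ℕ) (t : Fin p → ℕ) : Type :=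
  (Fin m) ⊕ (Fin p) ⊕ (Σ i : Fin m, Fin (s i)) ⊕ (Σ j : Fin p, Fin (t j) × Fin 2)

/-- The Cameron–Walker graph in standard form: a bipartite graph between the `vᵢ`
and the `w_j` with edge relation `E`, together with `sᵢ` pendant leaves at each `vᵢ`
and `t_j` pendant triangles at each `w_j`. -/
def CWGraph (m p : ℕ) (E : Fin m → Fin p → Prop) (s : Fin m → ℕ) (t : Fin p → ℕ) :
    SimpleGraph (CWVert m p s t) :=
  SimpleGraph.fromRel (fun u v =>
    match u, v with
    | Sum.inl i, Sum.inr (Sum.inl j) => E i j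
    | Sum.inl i, Sum.inr (Sum.inr (Sum.inl ⟨i', _⟩)) => i = i'
    | Sum.inr (Sum.inl j), Sum.inr (Sum.inr (Sum.inr ⟨j', _⟩)) => j = j'
    | Sum.inr (Sum.inr (Sum.inr ⟨j, l, _⟩)), Sum.inr (Sum.inr (Sum.inr ⟨j', l', _⟩)) =>
        j = j' ∧ HEq l l'
    | _, _ => False)

/-- The bipartite part of the Cameron–Walker graph, as a graph on `{v₁,…,vₘ} ∪ {w₁,…,w_p}`. -/
def CWBip (m p : ℕ) (E : Fin m → Fin p → Prop) : SimpleGraph ((Fin m) ⊕ (Fin p)) :=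
  SimpleGraph.fromRel (fun u v =>
    match u, v with
    | Sum.inl i, Sum.inr j => E i j
    | _, _ => False)

/-! Grouping each `vᵢ` with its first leaf and each `w_j` with its first pendant triangle
partitions the vertices into `∑ sᵢ + ∑ t_j` cliques, so an independent set has at most that many
vertices; all leaves together with one vertex of each triangle attain the bound.
A leaf at `vᵢ` can only be dominated from the star of `vᵢ`, and a triangle at `w_j` only from
the star of `w_j` with its triangles; these `m + p` regions are disjoint, so a dominating set has
at least `m + p` vertices, and the leaves together with all `w_j` form an independent dominating
set, of size `m + p` when every `sᵢ = 1`. -/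

namespace CWVert

variable {m p : ℕ} {s : Fin m → ℕ} {t : Fin p → ℕ}

theorem card_eq : Fintype.card (CWVert m p s t) = m + p + ∑ i, s i + 2 * ∑ j, t j := by
  simp [Fintype.card_sum, Fintype.card_sigma, Finset.sum_mul, mul_comm, add_assoc]

def block (hs : ∀ i, 0 < s i) (ht : ∀ j, 0 < t j) :
    CWVert m p s t → (Σ i, Fin (s i)) ⊕ (Σ j, Fin (t j))
  | Sum.inl i => Sum.inl ⟨i, ⟨0, hs i⟩⟩
  | Sum.inr (Sum.inl j) => Sum.inr ⟨j, ⟨0, ht j⟩⟩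
  | Sum.inr (Sum.inr (Sum.inl x)) => Sum.inl x
  | Sum.inr (Sum.inr (Sum.inr ⟨j, l, _⟩)) => Sum.inr ⟨j, l⟩

def base : CWVert m p s t → Fin m ⊕ Fin p
  | Sum.inl i => Sum.inl i
  | Sum.inr (Sum.inl j) => Sum.inr j
  | Sum.inr (Sum.inr (Sum.inl ⟨i, _⟩)) => Sum.inl i
  | Sum.inr (Sum.inr (Sum.inr ⟨j, _, _⟩)) => Sum.inr j

def pendant (hs : ∀ i, 0 < s i) (ht : ∀ j, 0 < t j) : Fin m ⊕ Fin p → CWVert m p s t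
  | Sum.inl i => Sum.inr (Sum.inr (Sum.inl ⟨i, ⟨0, hs i⟩⟩))
  | Sum.inr j => Sum.inr (Sum.inr (Sum.inr ⟨j, ⟨0, ht j⟩, 0⟩))

open Function in
def leavesAndTriangleCorners : Finset (CWVert m p s t) :=
  Finset.univ.map <|
    (Embedding.sumMap (Embedding.refl _)
      ⟨fun x : Σ j, Fin (t j) => ⟨x.1, x.2, 0⟩, fun ⟨_, _⟩ ⟨_, _⟩ h => by cases h; rfl⟩).trans
    (Embedding.inr.trans Embedding.inr)

open Function in
def leavesAndHubs : Finset (CWVert m p s t) :=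
  Finset.univ.map <| (Embedding.sumMap (Embedding.refl _) Embedding.inl).trans Embedding.inr

theorem card_leavesAndTriangleCorners :
    (leavesAndTriangleCorners : Finset (CWVert m p s t)).card = ∑ i, s i + ∑ j, t j := by
  simp [leavesAndTriangleCorners]

theorem card_leavesAndHubs :
    (leavesAndHubs : Finset (CWVert m p s t)).card = p + ∑ i, s i := by
  simp [leavesAndHubs]

end CWVert

namespace CWGraph

variable {m p : ℕ} {E : Fin m → Fin p → Prop} {s : Fin m → ℕ} {t : Fin p → ℕ}

theorem eq_or_adj_of_block_eq (hs : ∀ i, 0 < s i) (ht : ∀ j, 0 < t j)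
    {u v : CWVert m p s t} (h : CWVert.block hs ht u = CWVert.block hs ht v) :
    u = v ∨ (CWGraph m p E s t).Adj u v := by
  rcases u with i | j | ⟨i, k⟩ | ⟨j, l, c⟩ <;> rcases v with i' | j' | ⟨i', k'⟩ | ⟨j', l', c'⟩ <;>
    simp only [CWVert.block] at h <;> cases h <;> simp [CWGraph, em]

theorem base_eq_of_adj_pendant (hs : ∀ i, 0 < s i) (ht : ∀ j, 0 < t j) {u : CWVert m p s t}
    {x : Fin m ⊕ Fin p} (h : (CWGraph m p E s t).Adj u (CWVert.pendant hs ht x)) :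
    u.base = x := by
  rcases x with i | j <;> rcases u with i' | j' | ⟨i', k'⟩ | ⟨j', l', c'⟩ <;>
    simp [CWVert.pendant, CWVert.base, CWGraph] at h ⊢ <;> tauto

theorem card_le_of_isIndepFinset (hs : ∀ i, 0 < s i) (ht : ∀ j, 0 < t j)
    {A : Finset (CWVert m p s t)} (hA : (CWGraph m p E s t).IsIndepFinset A) :
    A.card ≤ ∑ i, s i + ∑ j, t j :=
  calc A.card ≤ (Finset.univ : Finset ((Σ i, Fin (s i)) ⊕ (Σ j, Fin (t j)))).card :=
        Finset.card_le_card_of_injOn (CWVert.block hs ht) (fun _ _ => Finset.mem_univ _)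
          fun u hu v hv h => (eq_or_adj_of_block_eq hs ht h).resolve_right (hA u hu v hv)
    _ = ∑ i, s i + ∑ j, t j := by simp

theorem add_le_card_of_dominating (hs : ∀ i, 0 < s i) (ht : ∀ j, 0 < t j)
    {A : Finset (CWVert m p s t)} (hA : ∀ v, v ∈ A ∨ ∃ u ∈ A, (CWGraph m p E s t).Adj u v) :
    m + p ≤ A.card :=
  calc m + p = (Finset.univ : Finset (Fin m ⊕ Fin p)).card := by simp
    _ ≤ A.card := Finset.card_le_card_of_surjOn CWVert.base fun x _ => by
        rcases hA (CWVert.pendant hs ht x) with h | ⟨u, hu, hadj⟩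
        · exact ⟨_, h, by cases x <;> rfl⟩
        · exact ⟨u, hu, base_eq_of_adj_pendant hs ht hadj⟩

theorem isIndepFinset_leavesAndTriangleCorners :
    (CWGraph m p E s t).IsIndepFinset CWVert.leavesAndTriangleCorners := by
  simp only [SimpleGraph.IsIndepFinset, CWVert.leavesAndTriangleCorners, Finset.forall_mem_map]
  rintro (x | ⟨j, l⟩) - (y | ⟨j', l'⟩) - <;> simp [CWGraph]
  exact fun h => ⟨h, fun e h' => h e.symm h'.symm⟩

theorem isIndepDomFinset_leavesAndHubs (hs : ∀ i, 0 < s i) :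
    (CWGraph m p E s t).IsIndepDomFinset CWVert.leavesAndHubs := by
  refine ⟨?_, ?_⟩
  · simp only [SimpleGraph.IsIndepFinset, CWVert.leavesAndHubs, Finset.forall_mem_map]
    rintro (j | x) - (j' | y) - <;> simp [CWGraph]
  · rintro (i | j | x | ⟨j, l, c⟩)
    · refine .inr ⟨Sum.inr (Sum.inr (Sum.inl ⟨i, ⟨0, hs i⟩⟩)), ?_, ?_⟩ <;>
        simp [CWVert.leavesAndHubs, CWGraph]
    · simp [CWVert.leavesAndHubs]
    · simp [CWVert.leavesAndHubs]
    · refine .inr ⟨Sum.inr (Sum.inl j), ?_, ?_⟩ <;> simp [CWVert.leavesAndHubs, CWGraph]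

end CWGraph

theorem Fin.sum_ite_val_eq_last (q t : ℕ) :
    ∑ j : Fin (q + 1), (if (j : ℕ) = q then t else 1) = q + t := by
  simp [Fin.sum_univ_castSucc, Fin.val_last, Nat.ne_of_lt]

theorem stmt_18_general (m p t : ℕ) (hp : 1 ≤ p) (ht : 1 ≤ t) :
    Fintype.card (CWVert m p (fun _ => 1) (fun j => if (j : ℕ) = p - 1 then t else 1))
        = 2 * m + 3 * p + 2 * t - 2 ∧
    IsGreatest {k : ℕ | ∃ A : Finset (CWVert m p (fun _ => 1)
          (fun j => if (j : ℕ) = p - 1 then t else 1)),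
        (CWGraph m p (fun _ _ => True) (fun _ => 1)
          (fun j => if (j : ℕ) = p - 1 then t else 1)).IsIndepFinset A ∧ A.card = k}
      (m + p + t - 1) ∧
    IsLeast {k : ℕ | ∃ A : Finset (CWVert m p (fun _ => 1)
          (fun j => if (j : ℕ) = p - 1 then t else 1)),
        (CWGraph m p (fun _ _ => True) (fun _ => 1)
          (fun j => if (j : ℕ) = p - 1 then t else 1)).IsIndepDomFinset A ∧ A.card = k}
      (m + p) := by
  obtain ⟨q, rfl⟩ : ∃ q, p = q + 1 := ⟨p - 1, by omega⟩
  have hs : ∀ _ : Fin m, 0 < 1 := fun _ => Nat.one_pos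
  have ht₀ : ∀ j : Fin (q + 1), 0 < if (j : ℕ) = q + 1 - 1 then t else 1 := by
    intro j; split <;> omega
  have hsum_s : ∑ _i : Fin m, 1 = m := by simp
  have hsum_t : ∑ j : Fin (q + 1), (if (j : ℕ) = q + 1 - 1 then t else 1) = q + t :=
    Fin.sum_ite_val_eq_last q t
  refine ⟨?_, ⟨⟨_, CWGraph.isIndepFinset_leavesAndTriangleCorners, ?_⟩, ?_⟩,
    ⟨⟨_, CWGraph.isIndepDomFinset_leavesAndHubs hs, ?_⟩, ?_⟩⟩
  · rw [CWVert.card_eq, hsum_s, hsum_t]; omega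
  · rw [CWVert.card_leavesAndTriangleCorners, hsum_s, hsum_t]; omega
  · rintro k ⟨A, hA, rfl⟩
    have := CWGraph.card_le_of_isIndepFinset hs ht₀ hA
    rw [hsum_s, hsum_t] at this; omega
  · rw [CWVert.card_leavesAndHubs, hsum_s]; omega
  · rintro k ⟨A, hA, rfl⟩
    exact CWGraph.add_le_card_of_dominating hs ht₀ hA.2

/-- the Cameron–Walker graph `G⁽¹⁾_{m,p,t}` (bipartite part `K_{m,p}`,
one leaf at each `vᵢ`, one pendant triangle at each of `w₁,…,w_{p−1}`, and `t`
pendant triangles at `w_p`) has `2m + 3p + 2t − 2` vertices, independence number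
`m + p + t − 1`, and `i(G) = m + p`. -/
theorem stmt_18 (m p t : ℕ) (hm : 1 ≤ m) (hp : 1 ≤ p) (ht : 1 ≤ t) :
    Fintype.card (CWVert m p (fun _ => 1) (fun j => if (j : ℕ) = p - 1 then t else 1))
        = 2 * m + 3 * p + 2 * t - 2 ∧
    IsGreatest {k : ℕ | ∃ A : Finset (CWVert m p (fun _ => 1)
          (fun j => if (j : ℕ) = p - 1 then t else 1)),
        (CWGraph m p (fun _ _ => True) (fun _ => 1)
          (fun j => if (j : ℕ) = p - 1 then t else 1)).IsIndepFinset A ∧ A.card = k}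
      (m + p + t - 1) ∧
    IsLeast {k : ℕ | ∃ A : Finset (CWVert m p (fun _ => 1)
          (fun j => if (j : ℕ) = p - 1 then t else 1)),
        (CWGraph m p (fun _ _ => True) (fun _ => 1)
          (fun j => if (j : ℕ) = p - 1 then t else 1)).IsIndepDomFinset A ∧ A.card = k}
      (m + p) :=
  stmt_18_general m p t hp ht
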